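/- Assume the full domain 𝒟 = 2^𝒜 ∖ {∅} and that 𝒳 is sufficiently large (|𝒳| ≥ |𝒜_A| + n·|𝒜_N| suffices). Fix an integer n with 2 < n < |𝒜_A| + 2. For every stochastic choice function ρ satisfying Limited Monotonicity (general form) and partial RU-rationality, there exists ρ' ∈ RU((n)) such that ‖ρ − ρ'‖² / |𝒟| ≤ 1/(n − 1), where (n) is the constant vector with every entry equal to n. -/

import Mathlib

/-!
Partial RU-rationality gives a distribution `ν` on rankings of the atomic aggregates. Draw `r`
from `ν` and, independently for every menu `B`, either keep the `r`-best atomic aggregate `b` of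
`B`, with probability `ρ(B, b) / ρ(B ∩ 𝒜_A, b)` (at most `1` by Limited Monotonicity), or else
choose a non-atomic aggregate of `B` in proportion to `ρ(B, ·)`. This writes `ρ` as a mixture of
deterministic choice functions with menu effects. The average of `M = n - 1` independent draws
has expected squared error `∑ Var / M ≤ ∑ ρ(B, a) / M = |𝒟| / M`, so some draw does as well.

An average of `M` deterministic menu-effect choice functions lies in `RU((M + 1))`: give each
non-atomic aggregate a representative alternative plus one alternative per draw `k`; the `k`-th
ranking (taken with probability `1 / M`) puts the alternatives of draw `k` first, then the atomic
aggregates in the order of the `k`-th atomic ranking, then everything else; and at the menu `B`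
the alternative of draw `k` is offered exactly when draw `k` chooses its aggregate from `B`.
-/

open Finset

noncomputable section

/-- A ranking (strict linear order) on a finite type `T`, encoded as a bijection with
`Fin (Fintype.card T)`; a lower index means a better alternative. -/
abbrev Ranking (T : Type) [Fintype T] : Type := T ≃ Fin (Fintype.card T)

/-- `x` is strictly preferred to `y` according to the ranking `r`. -/
def Ranking.pref {T : Type} [Fintype T] (r : Ranking T) (x y : T) : Prop :=
  r x < r y

/-- The `r`-best (most preferred) element of a nonempty finite set `D`. -/
def Ranking.best {T : Type} [Fintype T] [DecidableEq T] (r : Ranking T) (D : Finset T)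
    (hD : D.Nonempty) : T :=
  r.symm ((D.image fun x => r x).min' (hD.image fun x => r x))

/-- `μ` is a probability distribution on the finite type `T`. -/
def IsDistr {T : Type} [Fintype T] (μ : T → ℝ) : Prop :=
  (∀ t, 0 ≤ μ t) ∧ (∑ t, μ t) = 1

open Classical in
/-- The probability of the event `P` under the distribution `μ`. -/
def probOf {T : Type} [Fintype T] (μ : T → ℝ) (P : T → Prop) : ℝ :=
  ∑ t, if P t then μ t else 0

/-- `ρ` is a stochastic choice function on the domain `𝒟`: on every menu of the domain it is
nonnegative, sums to one over the menu, and vanishes outside the menu. -/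
def IsSCF {A : Type} [Fintype A] [DecidableEq A] (𝒟 : Finset (Finset A))
    (ρ : Finset A → A → ℝ) : Prop :=
  ∀ B ∈ 𝒟, (∀ a ∈ B, 0 ≤ ρ B a) ∧ ((∑ a ∈ B, ρ B a) = 1) ∧ (∀ a ∉ B, ρ B a = 0)

/-- An aggregation correspondence for the set `AN` of non-atomic aggregates: pairwise disjoint
nonempty sets of underlying alternatives, singletons exactly on atomic aggregates. -/
structure AggCorr (A 𝒳 : Type) [Fintype A] [DecidableEq A] [Fintype 𝒳] [DecidableEq 𝒳]
    (AN : Finset A) where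
  X : A → Finset 𝒳
  disj : ∀ a b, a ≠ b → Disjoint (X a) (X b)
  atomic : ∀ a ∉ AN, (X a).card = 1
  nonatomic : ∀ a ∈ AN, 2 ≤ (X a).card

/-- `lam` is a composition distribution for the aggregation correspondence `Xc` on the domain
`𝒟`: for every menu `B ∈ 𝒟` it is a probability distribution over profiles `S` of nonempty
subsets `S a ⊆ X a`. -/
def IsCompDistr {A 𝒳 : Type} [Fintype A] [DecidableEq A] [Fintype 𝒳] [DecidableEq 𝒳]
    {AN : Finset A} (Xc : AggCorr A 𝒳 AN) (𝒟 : Finset (Finset A))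
    (lam : Finset A → (A → Finset 𝒳) → ℝ) : Prop :=
  ∀ B ∈ 𝒟, IsDistr (lam B) ∧
    ∀ S : A → Finset 𝒳, lam B S ≠ 0 → ∀ a, S a ⊆ Xc.X a ∧ (S a).Nonempty

/-- The pair `(μ, lam)` (for the aggregation correspondence `Xc`) rationalizes `ρ` on `𝒟`. -/
def Rationalizes {A 𝒳 : Type} [Fintype A] [DecidableEq A] [Fintype 𝒳] [DecidableEq 𝒳]
    {AN : Finset A} (Xc : AggCorr A 𝒳 AN) (𝒟 : Finset (Finset A))
    (μ : Ranking 𝒳 → ℝ) (lam : Finset A → (A → Finset 𝒳) → ℝ)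
    (ρ : Finset A → A → ℝ) : Prop :=
  IsDistr μ ∧ IsCompDistr Xc 𝒟 lam ∧
    ∀ B ∈ 𝒟, ∀ a ∈ B,
      ρ B a = ∑ S : A → Finset 𝒳, lam B S *
        probOf μ (fun r => ∃ x ∈ S a, ∀ b ∈ B, b ≠ a → ∀ y ∈ S b, Ranking.pref r x y)

/-- RU-rationality: some pair `(μ, lam)` for some aggregation correspondence with underlying
alternatives `𝒳` and non-atomic aggregates `AN` rationalizes `ρ`. -/
def RURational (𝒳 : Type) [Fintype 𝒳] [DecidableEq 𝒳] {A : Type} [Fintype A] [DecidableEq A]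
    (AN : Finset A) (𝒟 : Finset (Finset A)) (ρ : Finset A → A → ℝ) : Prop :=
  ∃ Xc : AggCorr A 𝒳 AN, ∃ μ lam, Rationalizes Xc 𝒟 μ lam ρ

/-- ARU-rationality: `ρ` is a random utility model over the aggregates themselves. -/
def ARURational {A : Type} [Fintype A] [DecidableEq A]
    (𝒟 : Finset (Finset A)) (ρ : Finset A → A → ℝ) : Prop :=
  ∃ μA : Ranking A → ℝ, IsDistr μA ∧
    ∀ B ∈ 𝒟, ∀ a ∈ B, ρ B a = probOf μA (fun r => ∀ b ∈ B, b ≠ a → Ranking.pref r a b)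

/-- Partial RU-rationality: on menus of atomic aggregates only, `ρ` is a random utility model
over linear orders on the atomic aggregates `AA`. -/
def PartialRURational {A : Type} [Fintype A] [DecidableEq A]
    (AA : Finset A) (𝒟 : Finset (Finset A)) (ρ : Finset A → A → ℝ) : Prop :=
  ∃ ν : Ranking {c : A // c ∈ AA} → ℝ, IsDistr ν ∧
    ∀ B ∈ 𝒟, ∀ (hB : B ⊆ AA), ∀ a, ∀ (ha : a ∈ B),
      ρ B a = probOf ν (fun r =>
        ∀ b : {c : A // c ∈ AA}, (b : A) ∈ B → (b : A) ≠ a → Ranking.pref r ⟨a, hB ha⟩ b)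

/-- Limited Monotonicity (outside-option form): adding the outside option `a0` to a menu of
atomic aggregates weakly decreases every atomic choice frequency. -/
def LimitedMono {A : Type} [Fintype A] [DecidableEq A]
    (a0 : A) (AA : Finset A) (𝒟 : Finset (Finset A)) (ρ : Finset A → A → ℝ) : Prop :=
  ∀ D : Finset A, D ⊆ AA → D ∈ 𝒟 → insert a0 D ∈ 𝒟 →
    ∀ b ∈ D, ρ (insert a0 D) b ≤ ρ D b

/-- Limited Monotonicity (general form): adding any set `E` of non-atomic aggregates to a menu
of atomic aggregates weakly decreases every atomic choice frequency. -/
def LimitedMonoGen {A : Type} [Fintype A] [DecidableEq A]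
    (AA AN : Finset A) (𝒟 : Finset (Finset A)) (ρ : Finset A → A → ℝ) : Prop :=
  ∀ D E : Finset A, D ⊆ AA → E ⊆ AN → D ∈ 𝒟 → D ∪ E ∈ 𝒟 →
    ∀ b ∈ D, ρ (D ∪ E) b ≤ ρ D b

/-- The full domain: all nonempty subsets of `A`. -/
def fullDomain (A : Type) [Fintype A] [DecidableEq A] : Finset (Finset A) :=
  Finset.univ.filter fun D => D.Nonempty

/-- The deterministic "menu-effect" stochastic choice function `ρ^≻_𝓔`: it puts probability 1
on the `r`-maximum of `D` if `a0 ∉ D` or `D ∈ E`, and probability 1 on `a0` otherwise. -/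
def vertexSCF {A : Type} [Fintype A] [DecidableEq A]
    (a0 : A) (r : Ranking A) (E : Finset (Finset A)) : Finset A → A → ℝ :=
  fun D a =>
    if h : D.Nonempty then
      if a0 ∉ D ∨ D ∈ E then (if a = Ranking.best r D h then 1 else 0)
      else (if a = a0 then 1 else 0)
    else 0

open Classical in
/-- The deterministic menu-effect stochastic choice function with multiple non-atomic
aggregates: on a menu `D` belonging to `E b` (for the necessarily unique such `b`, the
collections being pairwise disjoint) it puts probability 1 on `b`; otherwise it puts
probability 1 on the `r`-maximum of `D`. -/
def vertexSCFM {A : Type} [Fintype A] [DecidableEq A]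
    (r : Ranking A) (E : A → Finset (Finset A)) : Finset A → A → ℝ :=
  fun D a =>
    if h : D.Nonempty then
      if hex : ∃ b, D ∈ E b then (if a = Classical.choose hex then 1 else 0)
      else (if a = Ranking.best r D h then 1 else 0)
    else 0

/-- Restriction of a choice function to the coordinates `(D, a)` with `D ∈ 𝒟`, viewed as a
vector in `ℝ^(Finset A × A)`. -/
def restrictTo {A : Type} [Fintype A] [DecidableEq A] (𝒟 : Finset (Finset A))
    (ρ : Finset A → A → ℝ) : Finset A × A → ℝ :=
  fun p => if p.1 ∈ 𝒟 then ρ p.1 p.2 else 0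

/-- `RU(n)` (outside-option setup): `ρ` is rationalized by some pair whose aggregation
correspondence satisfies `|X(a0)| = n`. -/
def RUn (𝒳 : Type) [Fintype 𝒳] [DecidableEq 𝒳] {A : Type} [Fintype A] [DecidableEq A]
    (a0 : A) (𝒟 : Finset (Finset A)) (n : ℕ) (ρ : Finset A → A → ℝ) : Prop :=
  ∃ Xc : AggCorr A 𝒳 ({a0} : Finset A), (Xc.X a0).card = n ∧
    ∃ μ lam, Rationalizes Xc 𝒟 μ lam ρ

/-- `RU((n_a))`: `ρ` is rationalized by some pair whose aggregation correspondence satisfies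
`|X(a)| = nv a` for every non-atomic aggregate `a`. -/
def RUvec (𝒳 : Type) [Fintype 𝒳] [DecidableEq 𝒳] {A : Type} [Fintype A] [DecidableEq A]
    (AN : Finset A) (𝒟 : Finset (Finset A)) (nv : A → ℕ) (ρ : Finset A → A → ℝ) : Prop :=
  ∃ Xc : AggCorr A 𝒳 AN, (∀ a ∈ AN, (Xc.X a).card = nv a) ∧
    ∃ μ lam, Rationalizes Xc 𝒟 μ lam ρ

/-- `μ` is non-overlapping for `Xc`: in every ranking in the support of `μ`, the underlying
alternatives of each non-atomic aggregate occupy adjacent positions. -/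
def NonOverlapping {A 𝒳 : Type} [Fintype A] [DecidableEq A] [Fintype 𝒳] [DecidableEq 𝒳]
    {AN : Finset A} (Xc : AggCorr A 𝒳 AN) (μ : Ranking 𝒳 → ℝ) : Prop :=
  ∀ r : Ranking 𝒳, μ r ≠ 0 → ∀ a ∈ AN, ∀ y ∈ Xc.X a, ∀ z ∈ Xc.X a, ∀ x : 𝒳,
    Ranking.pref r y x → Ranking.pref r x z → x ∈ Xc.X a

/-- `lam` is menu-independent: there is a single (unconditional) probability distribution over
full profiles whose marginal on the coordinates of each menu `B ∈ 𝒟` coincides with `lam B`. -/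
def MenuIndependent {A 𝒳 : Type} [Fintype A] [DecidableEq A] [Fintype 𝒳] [DecidableEq 𝒳]
    {AN : Finset A} (Xc : AggCorr A 𝒳 AN) (𝒟 : Finset (Finset A))
    (lam : Finset A → (A → Finset 𝒳) → ℝ) : Prop :=
  ∃ lamBar : (A → Finset 𝒳) → ℝ, IsDistr lamBar ∧
    (∀ S : A → Finset 𝒳, lamBar S ≠ 0 → ∀ a, S a ⊆ Xc.X a ∧ (S a).Nonempty) ∧
    ∀ B ∈ 𝒟, ∀ S0 : A → Finset 𝒳,
      probOf (lam B) (fun S => ∀ b ∈ B, S b = S0 b)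
        = probOf lamBar (fun S => ∀ b ∈ B, S b = S0 b)

/-- Squared Euclidean distance between two stochastic choice functions on the coordinates of
the domain `𝒟`. -/
def distSq {A : Type} [Fintype A] [DecidableEq A] (𝒟 : Finset (Finset A))
    (ρ ρ' : Finset A → A → ℝ) : ℝ :=
  ∑ B ∈ 𝒟, ∑ a ∈ B, (ρ B a - ρ' B a) ^ 2

section ProductDistributions

variable {γ κ : Type} {R : Type*} [Fintype γ] [DecidableEq γ] [Fintype κ] [CommSemiring R]

theorem sum_pi_prod_mul_prod (c g : γ → κ → R) (hc : ∀ j, ∑ o, c j o = 1) (s : Finset γ) :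
    ∑ d : γ → κ, (∏ j, c j (d j)) * ∏ j ∈ s, g j (d j) = ∏ j ∈ s, ∑ o, c j o * g j o := by
  let g' : γ → κ → R := fun j o => if j ∈ s then g j o else 1
  have hfactor : ∀ j, ∑ o, c j o * g' j o = if j ∈ s then ∑ o, c j o * g j o else 1 := by
    intro j
    by_cases hj : j ∈ s <;> simp [g', hj, hc]
  calc ∑ d : γ → κ, (∏ j, c j (d j)) * ∏ j ∈ s, g j (d j)
      = ∑ d : γ → κ, ∏ j, c j (d j) * g' j (d j) := by
        refine sum_congr rfl fun d _ => ?_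
        rw [prod_mul_distrib, ← univ_inter s, ← prod_ite_mem]
    _ = ∏ j ∈ s, ∑ o, c j o * g j o := by
        rw [← Fintype.prod_sum (fun j o => c j o * g' j o)]
        simp only [hfactor]
        rw [prod_ite_mem, univ_inter]

theorem sum_pi_prod_mul_apply (c : γ → κ → R) (hc : ∀ j, ∑ o, c j o = 1) (i : γ) (f : κ → R) :
    ∑ d : γ → κ, (∏ j, c j (d j)) * f (d i) = ∑ o, c i o * f o := by
  simpa using sum_pi_prod_mul_prod c (fun _ => f) hc {i}

theorem sum_pi_prod_mul_apply_mul_apply (c : γ → κ → R) (hc : ∀ j, ∑ o, c j o = 1) {i i' : γ}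
    (hi : i ≠ i') (f f' : κ → R) :
    ∑ d : γ → κ, (∏ j, c j (d j)) * (f (d i) * f' (d i')) =
      (∑ o, c i o * f o) * ∑ o, c i' o * f' o := by
  have := sum_pi_prod_mul_prod c (fun j => if j = i then f else f') hc {i, i'}
  simpa [prod_pair hi, hi.symm] using this

theorem isDistr_pi_prod {c : γ → κ → ℝ} (hc : ∀ j, IsDistr (c j)) :
    IsDistr fun d : γ → κ => ∏ j, c j (d j) :=
  ⟨fun d => prod_nonneg fun j _ => (hc j).1 (d j), by
    simpa using sum_pi_prod_mul_prod c (fun _ _ => 1) (fun j => (hc j).2) ∅⟩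

end ProductDistributions

section Sampling

variable {Ω : Type} [Fintype Ω] {w : Ω → ℝ}

theorem exists_ne_zero_le_of_sum_mul_le (hw : IsDistr w) {F : Ω → ℝ} {b : ℝ}
    (h : ∑ ω, w ω * F ω ≤ b) : ∃ ω, w ω ≠ 0 ∧ F ω ≤ b := by
  by_contra! hlt
  obtain ⟨ω₀, -, hω₀⟩ := exists_ne_zero_of_sum_ne_zero (hw.2.symm ▸ one_ne_zero)
  have hpos : ∀ ω, w ω ≠ 0 → 0 < w ω := fun ω hω => (hw.1 ω).lt_of_ne' hω
  have : ∑ ω, w ω * b < ∑ ω, w ω * F ω := by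
    refine sum_lt_sum (fun ω _ => ?_) ⟨ω₀, mem_univ _, ?_⟩
    · by_cases hω : w ω = 0
      · simp [hω]
      · exact (mul_lt_mul_of_pos_left (hlt ω hω) (hpos ω hω)).le
    · exact mul_lt_mul_of_pos_left (hlt ω₀ hω₀) (hpos ω₀ hω₀)
  rw [← sum_mul, hw.2, one_mul] at this
  linarith

theorem sum_pi_prod_mul_sq_sum (hw : IsDistr w) (M : ℕ) {f : Ω → ℝ}
    (hf : ∑ ω, w ω * f ω = 0) :
    ∑ t : Fin M → Ω, (∏ k, w (t k)) * (∑ k, f (t k)) ^ 2 = M * ∑ ω, w ω * f ω ^ 2 := by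
  have hpair : ∀ k l : Fin M, ∑ t : Fin M → Ω, (∏ j, w (t j)) * (f (t k) * f (t l)) =
      if k = l then ∑ ω, w ω * f ω ^ 2 else 0 := by
    intro k l
    split_ifs with hkl
    · subst hkl
      exact (sum_pi_prod_mul_apply (fun _ => w) (fun _ => hw.2) k fun ω => f ω * f ω).trans
        (by simp only [sq])
    · simpa [hf] using sum_pi_prod_mul_apply_mul_apply (fun _ => w) (fun _ => hw.2) hkl f f
  calc ∑ t : Fin M → Ω, (∏ k, w (t k)) * (∑ k, f (t k)) ^ 2
      = ∑ k, ∑ l, ∑ t : Fin M → Ω, (∏ j, w (t j)) * (f (t k) * f (t l)) := by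
        simp_rw [sq, sum_mul_sum, mul_sum]
        rw [sum_comm]
        exact sum_congr rfl fun k _ => sum_comm
    _ = M * ∑ ω, w ω * f ω ^ 2 := by simp [hpair]

theorem sum_mul_sq_sub_mean_le (hw : IsDistr w) {X : Ω → ℝ} (hX : ∀ ω, 0 ≤ X ω ∧ X ω ≤ 1) :
    ∑ ω, w ω * (X ω - ∑ ω', w ω' * X ω') ^ 2 ≤ ∑ ω, w ω * X ω := by
  set m := ∑ ω', w ω' * X ω'
  -- `X² ≤ X` on `[0, 1]`, so the variance is at most `m - m²`
  calc ∑ ω, w ω * (X ω - m) ^ 2 ≤ ∑ ω, ((1 - 2 * m) * (w ω * X ω) + m ^ 2 * w ω) := by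
        refine sum_le_sum fun ω _ => ?_
        have := mul_le_mul_of_nonneg_left (mul_le_of_le_one_left (hX ω).1 (hX ω).2) (hw.1 ω)
        nlinarith
    _ = m - m ^ 2 := by rw [sum_add_distrib, ← mul_sum, ← mul_sum, hw.2]; ring
    _ ≤ m := by nlinarith

theorem sum_pi_prod_mul_sq_mean_sub_avg_le (hw : IsDistr w) {M : ℕ} (hM : 0 < M) {X : Ω → ℝ}
    (hX : ∀ ω, 0 ≤ X ω ∧ X ω ≤ 1) :
    ∑ t : Fin M → Ω, (∏ k, w (t k)) * (∑ ω, w ω * X ω - (M : ℝ)⁻¹ * ∑ k, X (t k)) ^ 2 ≤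
      (∑ ω, w ω * X ω) / M := by
  set m := ∑ ω, w ω * X ω
  have hM' : (M : ℝ) ≠ 0 := by positivity
  have hcenter : ∑ ω, w ω * (X ω - m) = 0 := by
    simp_rw [mul_sub, sum_sub_distrib, ← sum_mul, hw.2, one_mul, m, sub_self]
  have hrewrite : ∀ t : Fin M → Ω,
      (m - (M : ℝ)⁻¹ * ∑ k, X (t k)) ^ 2 = (M : ℝ)⁻¹ ^ 2 * (∑ k, (X (t k) - m)) ^ 2 := by
    intro t
    rw [sum_sub_distrib, sum_const, card_univ, Fintype.card_fin, nsmul_eq_mul]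
    field_simp
    ring
  simp_rw [hrewrite, mul_left_comm _ ((M : ℝ)⁻¹ ^ 2), ← mul_sum,
    sum_pi_prod_mul_sq_sum hw M hcenter]
  calc (M : ℝ)⁻¹ ^ 2 * (M * ∑ ω, w ω * (X ω - m) ^ 2) = (∑ ω, w ω * (X ω - m) ^ 2) / M := by
        field_simp
    _ ≤ m / M := by gcongr; exact sum_mul_sq_sub_mean_le hw hX

theorem exists_sample_sum_sq_le {ι : Type*} (hw : IsDistr w) (X : Ω → ι → ℝ)
    (hX : ∀ ω i, 0 ≤ X ω i ∧ X ω i ≤ 1) (s : Finset ι) {M : ℕ} (hM : 0 < M) :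
    ∃ t : Fin M → Ω, (∀ k, w (t k) ≠ 0) ∧
      ∑ i ∈ s, (∑ ω, w ω * X ω i - (M : ℝ)⁻¹ * ∑ k, X (t k) i) ^ 2 ≤
        (∑ i ∈ s, ∑ ω, w ω * X ω i) / M := by
  have hW : IsDistr fun t : Fin M → Ω => ∏ k, w (t k) := isDistr_pi_prod fun _ => hw
  obtain ⟨t, ht, hle⟩ := exists_ne_zero_le_of_sum_mul_le hW (b := (∑ i ∈ s, ∑ ω, w ω * X ω i) / M)
    (F := fun t => ∑ i ∈ s, (∑ ω, w ω * X ω i - (M : ℝ)⁻¹ * ∑ k, X (t k) i) ^ 2) (by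
      simp_rw [mul_sum s]
      rw [sum_comm, sum_div]
      exact sum_le_sum fun i _ => sum_pi_prod_mul_sq_mean_sub_avg_le hw hM fun ω => hX ω i)
  exact ⟨t, fun k => (prod_ne_zero_iff.1 ht) k (mem_univ k), hle⟩

end Sampling

namespace Ranking

variable {T : Type} [Fintype T]

def IsTop (r : Ranking T) (P : T → Prop) (a : T) : Prop :=
  P a ∧ ∀ b, P b → b ≠ a → r.pref a b

variable {r : Ranking T} {P : T → Prop} {a b : T}

theorem IsTop.eq (ha : r.IsTop P a) (hb : r.IsTop P b) : a = b := by
  by_contra h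
  exact lt_asymm (ha.2 b hb.1 (Ne.symm h)) (hb.2 a ha.1 h)

theorem isTop_iff_eq (ha : r.IsTop P a) : r.IsTop P b ↔ b = a :=
  ⟨fun hb => hb.eq ha, fun h => h ▸ ha⟩

theorem exists_isTop (r : Ranking T) (h : ∃ a, P a) : ∃ a, r.IsTop P a := by
  classical
  obtain ⟨a₀, ha₀⟩ := h
  obtain ⟨a, ha, hmin⟩ := (univ.filter P).exists_min_image r ⟨a₀, by simpa using ha₀⟩
  refine ⟨a, (mem_filter.1 ha).2, fun b hb hne => ?_⟩
  exact lt_of_le_of_ne (hmin b (by simpa using hb)) fun h => hne (r.injective h).symm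

theorem exists_forall_pref_iff {ι : Type*} (r : Ranking T) {S : ι → Finset T} {B : Finset ι}
    {w : ι} {z : T} (hz : z ∈ S w) (hw : w ∈ B)
    (hbeat : ∀ b ∈ B, b ≠ w → ∀ y ∈ S b, r.pref z y) {a : ι} (ha : a ∈ B) :
    (∃ x ∈ S a, ∀ b ∈ B, b ≠ a → ∀ y ∈ S b, r.pref x y) ↔ a = w := by
  refine ⟨fun ⟨x, hx, hxbeat⟩ => ?_, fun h => h ▸ ⟨z, hz, fun b hb hbw => hbeat b hb hbw⟩⟩
  by_contra haw
  exact lt_asymm (hxbeat w hw (Ne.symm haw) z hz) (hbeat a ha haw x hx)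

def ofInjective {α : Type*} [LinearOrder α] (f : T → α) (hf : Function.Injective f) :
    Ranking T :=
  letI := LinearOrder.lift' f hf
  (Fintype.orderIsoFinOfCardEq T rfl).symm.toEquiv

theorem pref_ofInjective {α : Type*} [LinearOrder α] {f : T → α} (hf : Function.Injective f)
    (x y : T) : (ofInjective f hf).pref x y ↔ f x < f y := by
  let _ := LinearOrder.lift' f hf
  exact (Fintype.orderIsoFinOfCardEq T rfl).symm.lt_iff_lt

def ofScore (f : T → ℕ) : Ranking T :=
  ofInjective (fun x => toLex (f x, Fintype.equivFin T x)) fun _ _ h =>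
    (Fintype.equivFin T).injective (Prod.ext_iff.1 (toLex.injective h)).2

theorem pref_ofScore_of_lt {f : T → ℕ} {x y : T} (h : f x < f y) : (ofScore f).pref x y :=
  (pref_ofInjective _ x y).2 (Prod.Lex.toLex_lt_toLex.2 (Or.inl h))

end Ranking

section Empirical

variable {T ι : Type} [Fintype T] [Fintype ι]

open Classical in
def empirical (σ : ι → T) : T → ℝ :=
  fun t => (Fintype.card ι : ℝ)⁻¹ * ∑ k, if σ k = t then 1 else 0

open Classical in
theorem probOf_empirical (σ : ι → T) (P : T → Prop) :
    probOf (empirical σ) P = (Fintype.card ι : ℝ)⁻¹ * ∑ k, if P (σ k) then 1 else 0 := by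
  have hterm : ∀ t, (if P t then empirical σ t else 0) =
      (Fintype.card ι : ℝ)⁻¹ * ∑ k, if σ k = t then (if P (σ k) then 1 else 0) else 0 := by
    intro t
    have hswap : ∀ k, (if σ k = t then (if P (σ k) then (1 : ℝ) else 0) else 0) =
        if P t then (if σ k = t then 1 else 0) else 0 := by
      intro k
      by_cases h : σ k = t <;> simp [h]
    simp only [hswap, empirical]
    split_ifs <;> simp
  rw [probOf, sum_congr rfl fun t _ => hterm t, ← mul_sum, sum_comm]
  simp

theorem isDistr_empirical [Nonempty ι] (σ : ι → T) : IsDistr (empirical σ) := by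
  refine ⟨fun t => by unfold empirical; positivity, ?_⟩
  have := probOf_empirical σ fun _ => True
  simp only [probOf, if_true, sum_const, card_univ, nsmul_eq_mul, mul_one] at this
  rw [this, inv_mul_cancel₀ (by simp)]

end Empirical

section DeterministicChoice

variable {A : Type}

abbrev Menu (A : Type) : Type :=
  {B : Finset A // B.Nonempty}

def Wins (d : Menu A → A) (B : Finset A) (a : A) : Prop :=
  ∃ h : B.Nonempty, d ⟨B, h⟩ = a

open Classical in
def detSCF (d : Menu A → A) (B : Finset A) (a : A) : ℝ :=
  if Wins d B a then 1 else 0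

variable [DecidableEq A]

theorem detSCF_of_nonempty (d : Menu A → A) {B : Finset A} (hB : B.Nonempty) (a : A) :
    detSCF d B a = if d ⟨B, hB⟩ = a then 1 else 0 := by
  simp [detSCF, Wins, hB]

variable [Fintype A]

theorem mem_fullDomain {B : Finset A} : B ∈ fullDomain A ↔ B.Nonempty := by
  simp [fullDomain]

def avgSCF {M : ℕ} (d : Fin M → Menu A → A) (B : Finset A) (a : A) : ℝ :=
  (M : ℝ)⁻¹ * ∑ k, detSCF (d k) B a

theorem isSCF_avgSCF {M : ℕ} (hM : 0 < M) {d : Fin M → Menu A → A} (hd : ∀ k B, d k B ∈ B.1) :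
    IsSCF (fullDomain A) (avgSCF d) := by
  intro B hB
  have hB' := mem_fullDomain.1 hB
  refine ⟨fun a _ => ?_, ?_, fun a ha => ?_⟩
  · unfold avgSCF detSCF
    positivity
  · simp_rw [avgSCF, ← mul_sum]
    rw [sum_comm]
    simp_rw [detSCF_of_nonempty _ hB', sum_ite_eq, if_pos (hd _ ⟨B, hB'⟩)]
    simp [hM.ne']
  · simp_rw [avgSCF, detSCF_of_nonempty _ hB']
    simp [fun k => ne_of_mem_of_not_mem (hd k ⟨B, hB'⟩) ha]

end DeterministicChoice

section Mixture

variable {A : Type} [Fintype A] [DecidableEq A] {AN : Finset A} {ρ : Finset A → A → ℝ}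

theorem IsSCF.sum_inter_compl_add_sum_inter (hρ : IsSCF (fullDomain A) ρ) {B : Finset A}
    (hB : B.Nonempty) : ∑ b ∈ B ∩ ANᶜ, ρ B b + ∑ a ∈ B ∩ AN, ρ B a = 1 := by
  rw [add_comm, ← sdiff_eq_inter_compl, sum_inter_add_sum_sdiff]
  exact (hρ B (mem_fullDomain.2 hB)).2.1

theorem LimitedMonoGen.le_inter_compl (hLM : LimitedMonoGen ANᶜ AN (fullDomain A) ρ)
    {B : Finset A} {b : A} (hb : b ∈ B ∩ ANᶜ) : ρ B b ≤ ρ (B ∩ ANᶜ) b := by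
  have hB : B ∩ ANᶜ ∪ B ∩ AN = B := by
    rw [← inter_union_distrib_left, union_comm, union_compl, inter_univ]
  have := hLM (B ∩ ANᶜ) (B ∩ AN) inter_subset_right inter_subset_right
    (mem_fullDomain.2 ⟨b, hb⟩) (by rw [hB]; exact mem_fullDomain.2 ⟨b, (mem_inter.1 hb).1⟩) b hb
  rwa [hB] at this

theorem PartialRURational.exists_probOf_isTop
    (hPR : PartialRURational ANᶜ (fullDomain A) ρ) :
    ∃ ν : Ranking {c // c ∈ ANᶜ} → ℝ, IsDistr ν ∧ ∀ (B : Finset A) (a : A) (ha : a ∈ ANᶜ),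
      a ∈ B → probOf ν (fun r => r.IsTop (fun c => (c : A) ∈ B) ⟨a, ha⟩) = ρ (B ∩ ANᶜ) a := by
  obtain ⟨ν, hν, hrep⟩ := hPR
  refine ⟨ν, hν, fun B a ha haB => ?_⟩
  rw [hrep _ (mem_fullDomain.2 ⟨a, mem_inter.2 ⟨haB, ha⟩⟩) inter_subset_right a
    (mem_inter.2 ⟨haB, ha⟩)]
  congr 1
  ext r
  simp only [Ranking.IsTop, haB, true_and, mem_inter, ne_eq, Subtype.ext_iff]
  exact ⟨fun h b hb => h b hb.1, fun h b hb => h b ⟨hb, b.2⟩⟩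

def aggMass (AN : Finset A) (ρ : Finset A → A → ℝ) (B : Finset A) : ℝ :=
  ∑ a ∈ B ∩ AN, ρ B a

/-- Probability that an atomic aggregate `b`, when it is the top atomic aggregate of `B`, stays
chosen once the non-atomic aggregates of `B` are offered. Where `ρ (B ∩ ANᶜ) b = 0`, Limited
Monotonicity gives `ρ B b = 0`, so `x / 0 = 0` does no harm. -/
def retention (AN : Finset A) (ρ : Finset A → A → ℝ) (B : Finset A) (b : A) : ℝ :=
  if aggMass AN ρ B = 0 then 1 else ρ B b / ρ (B ∩ ANᶜ) b

section Retention

variable (hρ : IsSCF (fullDomain A) ρ) (hLM : LimitedMonoGen ANᶜ AN (fullDomain A) ρ)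
  {B : Finset A} {b : A}
include hρ

theorem retention_nonneg (hb : b ∈ B ∩ ANᶜ) : 0 ≤ retention AN ρ B b := by
  unfold retention
  split_ifs
  · exact zero_le_one
  · exact div_nonneg ((hρ B (mem_fullDomain.2 ⟨b, (mem_inter.1 hb).1⟩)).1 b (mem_inter.1 hb).1)
      ((hρ _ (mem_fullDomain.2 ⟨b, hb⟩)).1 b hb)

include hLM

theorem retention_le_one (hb : b ∈ B ∩ ANᶜ) : retention AN ρ B b ≤ 1 := by
  unfold retention
  split_ifs
  · exact le_rfl
  · exact div_le_one_of_le₀ (hLM.le_inter_compl hb) ((hρ _ (mem_fullDomain.2 ⟨b, hb⟩)).1 b hb)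

theorem mul_retention (hb : b ∈ B ∩ ANᶜ) : ρ (B ∩ ANᶜ) b * retention AN ρ B b = ρ B b := by
  have hle : ∀ c ∈ B ∩ ANᶜ, ρ B c ≤ ρ (B ∩ ANᶜ) c := fun c hc => hLM.le_inter_compl hc
  have hbB : b ∈ B := (mem_inter.1 hb).1
  unfold retention
  split_ifs with h0
  · -- both `ρ B ·` and `ρ (B ∩ ANᶜ) ·` are distributions on `B ∩ ANᶜ`, the first below the second
    refine (mul_one _).trans ((sum_eq_sum_iff_of_le hle).1 ?_ b hb).symm
    have := hρ.sum_inter_compl_add_sum_inter (AN := AN) ⟨b, hbB⟩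
    rw [(hρ _ (mem_fullDomain.2 ⟨b, hb⟩)).2.1]
    rw [aggMass] at h0
    linarith
  · exact mul_div_cancel_of_imp' fun hD =>
      le_antisymm (hD ▸ hle b hb) ((hρ B (mem_fullDomain.2 ⟨b, hbB⟩)).1 b hbB)

end Retention

open Classical in
def topWeight (AN : Finset A) (ρ : Finset A → A → ℝ) (B : Finset A)
    (r : Ranking {c // c ∈ ANᶜ}) (a : A) : ℝ :=
  if h : a ∈ ANᶜ then
    if r.IsTop (fun c => (c : A) ∈ B) ⟨a, h⟩ then retention AN ρ B a else 0
  else 0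

section TopWeight

variable {B : Finset A} {r : Ranking {c // c ∈ ANᶜ}} {a : A}

theorem topWeight_eq_ite {t : {c // c ∈ ANᶜ}} (ht : r.IsTop (fun c => (c : A) ∈ B) t) (a : A) :
    topWeight AN ρ B r a = if a = t then retention AN ρ B t else 0 := by
  by_cases haN : a ∈ ANᶜ
  · simp only [topWeight, dif_pos haN, Ranking.isTop_iff_eq ht, Subtype.ext_iff]
    split_ifs with h
    · rw [h]
    · rfl
  · rw [topWeight, dif_neg haN, if_neg fun h : a = t => haN (h ▸ t.2)]

theorem topWeight_of_not_mem (ha : a ∉ B ∩ ANᶜ) : topWeight AN ρ B r a = 0 := by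
  unfold topWeight
  split_ifs with haN htop
  · exact absurd (mem_inter.2 ⟨htop.1, haN⟩) ha
  all_goals rfl

theorem sum_topWeight {t : {c // c ∈ ANᶜ}} (ht : r.IsTop (fun c => (c : A) ∈ B) t) :
    ∑ a, topWeight AN ρ B r a = retention AN ρ B t := by
  simp [topWeight_eq_ite ht]

variable (hρ : IsSCF (fullDomain A) ρ)
include hρ

theorem topWeight_nonneg : 0 ≤ topWeight AN ρ B r a := by
  unfold topWeight
  split_ifs with haN htop
  · exact retention_nonneg hρ (mem_inter.2 ⟨htop.1, haN⟩)
  all_goals exact le_rfl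

theorem sum_topWeight_le_one (hLM : LimitedMonoGen ANᶜ AN (fullDomain A) ρ) :
    ∑ a, topWeight AN ρ B r a ≤ 1 := by
  by_cases hD : (B ∩ ANᶜ).Nonempty
  · obtain ⟨b, hb⟩ := hD
    obtain ⟨t, ht⟩ := r.exists_isTop (P := fun c : {c // c ∈ ANᶜ} => (c : A) ∈ B)
      ⟨⟨b, (mem_inter.1 hb).2⟩, (mem_inter.1 hb).1⟩
    rw [sum_topWeight ht]
    exact retention_le_one hρ hLM (mem_inter.2 ⟨ht.1, t.2⟩)
  · simp [topWeight_of_not_mem fun ha => hD ⟨_, ha⟩]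

end TopWeight

def menuKernel (AN : Finset A) (ρ : Finset A → A → ℝ) (B : Finset A)
    (r : Ranking {c // c ∈ ANᶜ}) (a : A) : ℝ :=
  topWeight AN ρ B r a +
    (1 - ∑ b, topWeight AN ρ B r b) * if a ∈ B ∩ AN then ρ B a / aggMass AN ρ B else 0

section MenuKernel

variable (hρ : IsSCF (fullDomain A) ρ) (hLM : LimitedMonoGen ANᶜ AN (fullDomain A) ρ)
  {B : Finset A} {r : Ranking {c // c ∈ ANᶜ}} {a : A}

theorem menuKernel_ne_zero (h : menuKernel AN ρ B r a ≠ 0) :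
    a ∈ B ∧ ∀ ha : a ∈ ANᶜ, r.IsTop (fun c => (c : A) ∈ B) ⟨a, ha⟩ := by
  by_cases haN : a ∈ ANᶜ
  · have htop : r.IsTop (fun c => (c : A) ∈ B) ⟨a, haN⟩ := by
      by_contra htop
      exact h (by simp [menuKernel, mem_compl.1 haN, topWeight, haN, htop])
    exact ⟨htop.1, fun _ => htop⟩
  · have hin : a ∈ B ∩ AN := by
      by_contra hin
      exact h (by simp [menuKernel, hin, topWeight, haN])
    exact ⟨(mem_inter.1 hin).1, fun ha => absurd ha haN⟩

include hρ

theorem sum_menuKernel (hB : B.Nonempty) : ∑ a, menuKernel AN ρ B r a = 1 := by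
  have hshare : ∑ a, (if a ∈ B ∩ AN then ρ B a / aggMass AN ρ B else 0) =
      aggMass AN ρ B / aggMass AN ρ B := by
    rw [sum_ite_mem, univ_inter, ← sum_div, aggMass]
  unfold menuKernel
  rw [sum_add_distrib, ← mul_sum, hshare]
  by_cases h0 : aggMass AN ρ B = 0
  · -- all of `ρ B` sits on atomic aggregates, so `B` has an `r`-top atomic one, kept for sure
    have hD : (B ∩ ANᶜ).Nonempty := by
      by_contra hD
      have := hρ.sum_inter_compl_add_sum_inter (AN := AN) hB
      rw [not_nonempty_iff_eq_empty.1 hD, sum_empty] at this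
      rw [aggMass] at h0
      linarith
    obtain ⟨b, hb⟩ := hD
    obtain ⟨t, ht⟩ := r.exists_isTop (P := fun c : {c // c ∈ ANᶜ} => (c : A) ∈ B)
      ⟨⟨b, (mem_inter.1 hb).2⟩, (mem_inter.1 hb).1⟩
    rw [sum_topWeight ht, retention, if_pos h0, h0, div_zero, mul_zero, add_zero]
  · rw [div_self h0]
    ring

include hLM

theorem menuKernel_nonneg : 0 ≤ menuKernel AN ρ B r a := by
  refine add_nonneg (topWeight_nonneg hρ)
    (mul_nonneg (sub_nonneg.2 (sum_topWeight_le_one hρ hLM)) ?_)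
  split_ifs with ha
  · have hB := mem_fullDomain.2 ⟨a, (mem_inter.1 ha).1⟩
    exact div_nonneg ((hρ B hB).1 a (mem_inter.1 ha).1)
      (sum_nonneg fun x hx => (hρ B hB).1 x (mem_inter.1 hx).1)
  · exact le_rfl

variable {ν : Ranking {c // c ∈ ANᶜ} → ℝ}
  (hν : ∀ (B : Finset A) (a : A) (ha : a ∈ ANᶜ), a ∈ B →
    probOf ν (fun r => r.IsTop (fun c => (c : A) ∈ B) ⟨a, ha⟩) = ρ (B ∩ ANᶜ) a)
include hν

theorem sum_mul_topWeight (B : Finset A) (a : A) :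
    ∑ r, ν r * topWeight AN ρ B r a = if a ∈ B ∩ ANᶜ then ρ B a else 0 := by
  by_cases ha : a ∈ B ∩ ANᶜ
  · obtain ⟨haB, haN⟩ := mem_inter.1 ha
    calc ∑ r, ν r * topWeight AN ρ B r a
        = probOf ν (fun r => r.IsTop (fun c => (c : A) ∈ B) ⟨a, haN⟩) * retention AN ρ B a := by
          rw [probOf, sum_mul]
          refine sum_congr rfl fun r _ => ?_
          simp only [topWeight, dif_pos haN]
          split_ifs <;> ring
      _ = ρ B a := by rw [hν B a haN haB, mul_retention hρ hLM ha]
      _ = _ := (if_pos ha).symm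
  · simp [topWeight_of_not_mem ha, ha]

theorem sum_mul_menuKernel (hνd : IsDistr ν) (hB : B.Nonempty) (a : A) :
    ∑ r, ν r * menuKernel AN ρ B r a = ρ B a := by
  have hkept : ∑ r, ν r * ∑ b, topWeight AN ρ B r b = 1 - aggMass AN ρ B := by
    simp_rw [mul_sum]
    rw [sum_comm]
    simp_rw [sum_mul_topWeight hρ hLM hν B, sum_ite_mem, univ_inter]
    rw [aggMass]
    linarith [hρ.sum_inter_compl_add_sum_inter (AN := AN) hB]
  have hlost : ∑ r, ν r * (1 - ∑ b, topWeight AN ρ B r b) = aggMass AN ρ B := by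
    simp_rw [mul_sub, mul_one, sum_sub_distrib, hνd.2, hkept]
    ring
  simp_rw [menuKernel, mul_add, ← mul_assoc, sum_add_distrib, ← sum_mul, hlost,
    sum_mul_topWeight hρ hLM hν B]
  by_cases haB : a ∈ B
  · by_cases haN : a ∈ AN
    · rw [if_neg fun h => (mem_compl.1 (mem_inter.1 h).2) haN, if_pos (mem_inter.2 ⟨haB, haN⟩),
        zero_add]
      refine mul_div_cancel_of_imp' fun h0 => ?_
      have hnn := (hρ B (mem_fullDomain.2 hB)).1
      exact (sum_eq_zero_iff_of_nonneg fun x hx => hnn x (mem_inter.1 hx).1).1 h0 a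
        (mem_inter.2 ⟨haB, haN⟩)
    · rw [if_pos (mem_inter.2 ⟨haB, mem_compl.2 haN⟩), if_neg fun h => haN (mem_inter.1 h).2,
        mul_zero, add_zero]
  · rw [if_neg fun h => haB (mem_inter.1 h).1, if_neg fun h => haB (mem_inter.1 h).1, mul_zero,
      add_zero, (hρ B (mem_fullDomain.2 hB)).2.2 a haB]

end MenuKernel

def IsMenuEffect (AN : Finset A) (r : Ranking {c // c ∈ ANᶜ}) (d : Menu A → A) : Prop :=
  ∀ B : Menu A, d B ∈ B.1 ∧ ∀ h : d B ∈ ANᶜ, r.IsTop (fun c => (c : A) ∈ B.1) ⟨d B, h⟩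

theorem exists_mixture_detSCF (hρ : IsSCF (fullDomain A) ρ)
    (hLM : LimitedMonoGen ANᶜ AN (fullDomain A) ρ)
    (hPR : PartialRURational ANᶜ (fullDomain A) ρ) :
    ∃ w : Ranking {c // c ∈ ANᶜ} × (Menu A → A) → ℝ, IsDistr w ∧
      (∀ ω, w ω ≠ 0 → IsMenuEffect AN ω.1 ω.2) ∧
      ∀ B ∈ fullDomain A, ∀ a, ∑ ω, w ω * detSCF ω.2 B a = ρ B a := by
  obtain ⟨ν, hνd, hν⟩ := hPR.exists_probOf_isTop
  let κ (r : Ranking {c // c ∈ ANᶜ}) (B : Menu A) : A → ℝ := menuKernel AN ρ B.1 r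
  have hκ : ∀ r B, IsDistr (κ r B) := fun r B =>
    ⟨fun _ => menuKernel_nonneg hρ hLM, sum_menuKernel hρ B.2⟩
  refine ⟨fun ω => ν ω.1 * ∏ B, κ ω.1 B (ω.2 B),
    ⟨fun ω => mul_nonneg (hνd.1 _) ((isDistr_pi_prod (hκ ω.1)).1 ω.2), ?_⟩, ?_, ?_⟩
  · simp_rw [Fintype.sum_prod_type, ← mul_sum, (isDistr_pi_prod (hκ _)).2, mul_one, hνd.2]
  · intro ω h B
    exact menuKernel_ne_zero ((prod_ne_zero_iff.1 (right_ne_zero_of_mul h)) B (mem_univ B))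
  · intro B hB a
    have hB' := mem_fullDomain.1 hB
    rw [Fintype.sum_prod_type, ← sum_mul_menuKernel hρ hLM hν hνd hB' a]
    refine sum_congr rfl fun r _ => ?_
    calc ∑ d : Menu A → A, ν r * (∏ B, κ r B (d B)) * detSCF d B a
        = ν r * ∑ d : Menu A → A, (∏ B, κ r B (d B)) *
            (fun o => if o = a then (1 : ℝ) else 0) (d ⟨B, hB'⟩) := by
          simp_rw [mul_sum, mul_assoc, detSCF_of_nonempty _ hB']
      _ = ν r * menuKernel AN ρ B r a := by
          congr 1
          convert sum_pi_prod_mul_apply (κ r) (fun B => (hκ r B).2) ⟨B, hB'⟩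
            (fun o => if o = a then (1 : ℝ) else 0) using 1
          simp [κ]

end Mixture

section Realization

variable {A 𝒳 : Type} [Fintype A] [DecidableEq A] [DecidableEq 𝒳] {AN : Finset A} {M : ℕ}

variable (AN M) in
/-- Underlying alternatives used to realize an average of `M` deterministic choice functions:
one per atomic aggregate, and for each non-atomic aggregate a representative (`none`) together
with one alternative per sample (`some k`). -/
abbrev Slot : Type :=
  {c : A // c ∈ ANᶜ} ⊕ ({a : A // a ∈ AN} × Option (Fin M))

variable (ι : Slot AN M ↪ 𝒳)

def slotCorr (a : A) : Finset 𝒳 :=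
  if h : a ∈ AN then univ.image fun o => ι (.inr (⟨a, h⟩, o))
  else {ι (.inl ⟨a, mem_compl.2 h⟩)}

theorem card_slotCorr_of_mem {a : A} (h : a ∈ AN) : (slotCorr ι a).card = M + 1 := by
  rw [slotCorr, dif_pos h, card_image_of_injective _ fun o o' hoo' => by simpa using hoo']
  simp

variable (ω : Fin M → Ranking {c // c ∈ ANᶜ} × (Menu A → A))

open Classical in
def composition (B : Finset A) (a : A) : Finset 𝒳 :=
  if h : a ∈ AN then
    (univ.filter fun o : Option (Fin M) => ∀ k ∈ o, Wins (ω k).2 B a).image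
      fun o => ι (.inr (⟨a, h⟩, o))
  else {ι (.inl ⟨a, mem_compl.2 h⟩)}

theorem composition_subset_slotCorr (B : Finset A) (a : A) :
    composition ι ω B a ⊆ slotCorr ι a := by
  unfold composition slotCorr
  split_ifs
  · exact image_subset_image (subset_univ _)
  · exact subset_rfl

theorem composition_nonempty (B : Finset A) (a : A) : (composition ι ω B a).Nonempty := by
  unfold composition
  split_ifs
  · exact ⟨_, mem_image.2 ⟨none, by simp, rfl⟩⟩
  · exact singleton_nonempty _

def chosenSlot (k : Fin M) (B : Menu A) : Slot AN M :=
  if h : (ω k).2 B ∈ AN then .inr (⟨_, h⟩, some k) else .inl ⟨_, mem_compl.2 h⟩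

theorem chosenSlot_mem_composition (k : Fin M) (B : Menu A) :
    ι (chosenSlot ω k B) ∈ composition ι ω B.1 ((ω k).2 B) := by
  unfold chosenSlot composition
  split_ifs with h
  · exact mem_image.2 ⟨some k, by simp [Wins, B.2], rfl⟩
  · exact mem_singleton_self _

def slotScore (k : Fin M) : Slot AN M → ℕ
  | .inl c => 1 + (ω k).1 c
  | .inr (_, o) => if o = some k then 0 else Fintype.card {c // c ∈ ANᶜ} + 1

variable [Fintype 𝒳]

def slotAggCorr (hM : 0 < M) : AggCorr A 𝒳 AN where
  X := slotCorr ι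
  disj a b hab := by
    rw [disjoint_left]
    unfold slotCorr
    split_ifs <;> simp [hab, Ne.symm hab]
  atomic a h := by rw [slotCorr, dif_neg h, card_singleton]
  nonatomic a h := by rw [card_slotCorr_of_mem ι h]; omega

def sampleRanking (k : Fin M) : Ranking 𝒳 :=
  Ranking.ofScore (Function.extend ι (slotScore ω k) fun _ => 0)

omit [DecidableEq 𝒳] in
theorem sampleRanking_pref {k : Fin M} {s s' : Slot AN M}
    (h : slotScore ω k s < slotScore ω k s') : (sampleRanking ι ω k).pref (ι s) (ι s') :=
  Ranking.pref_ofScore_of_lt (by simpa only [ι.injective.extend_apply] using h)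

theorem chosenSlot_pref {k : Fin M} (hω : IsMenuEffect AN (ω k).1 (ω k).2) (B : Menu A) {b : A}
    (hb : b ∈ B.1) (hbk : b ≠ (ω k).2 B) {y : 𝒳} (hy : y ∈ composition ι ω B.1 b) :
    (sampleRanking ι ω k).pref (ι (chosenSlot ω k B)) y := by
  have hrank : ∀ c : {c // c ∈ ANᶜ}, ((ω k).1 c : ℕ) < Fintype.card {c // c ∈ ANᶜ} :=
    fun c => ((ω k).1 c).2
  by_cases hbN : b ∈ AN
  · obtain ⟨o, ho, rfl⟩ : ∃ o : Option (Fin M), (∀ k' ∈ o, Wins (ω k').2 B.1 b) ∧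
        ι (.inr (⟨b, hbN⟩, o)) = y := by
      simpa [composition, hbN] using hy
    have hok : o ≠ some k := fun hok => hbk (ho k (hok ▸ rfl)).2.symm
    apply sampleRanking_pref
    unfold chosenSlot
    split_ifs with hw
    · simp [slotScore, hok]
    · simp only [slotScore, hok, if_false]
      have := hrank ⟨_, mem_compl.2 hw⟩
      omega
  · obtain rfl : y = ι (.inl ⟨b, mem_compl.2 hbN⟩) := by simpa [composition, hbN] using hy
    apply sampleRanking_pref
    unfold chosenSlot
    split_ifs with hw
    · simp [slotScore]
    · have htop := ((hω B).2 (mem_compl.2 hw)).2 ⟨b, mem_compl.2 hbN⟩ hb (by simpa using hbk)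
      simp only [slotScore]
      exact Nat.add_lt_add_left htop 1

theorem exists_forall_pref_iff_wins {k : Fin M} (hω : IsMenuEffect AN (ω k).1 (ω k).2)
    {B : Finset A} (hB : B.Nonempty) {a : A} (ha : a ∈ B) :
    (∃ x ∈ composition ι ω B a, ∀ b ∈ B, b ≠ a → ∀ y ∈ composition ι ω B b,
      (sampleRanking ι ω k).pref x y) ↔ Wins (ω k).2 B a := by
  rw [Ranking.exists_forall_pref_iff _ (chosenSlot_mem_composition ι ω k ⟨B, hB⟩)
    (hω ⟨B, hB⟩).1 (fun b hb hbk _ hy => chosenSlot_pref ι ω hω ⟨B, hB⟩ hb hbk hy) ha]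
  exact ⟨fun h => ⟨hB, h.symm⟩, fun ⟨_, h⟩ => h.symm⟩

omit ι in
theorem ruvec_avgSCF (hM : 0 < M) (hX : (ANᶜ).card + (M + 1) * AN.card ≤ Fintype.card 𝒳)
    (hω : ∀ k, IsMenuEffect AN (ω k).1 (ω k).2) :
    RUvec 𝒳 AN (fullDomain A) (fun _ => M + 1) (avgSCF fun k => (ω k).2) := by
  have : Nonempty (Fin M) := ⟨⟨0, hM⟩⟩
  obtain ⟨ι⟩ : Nonempty (Slot AN M ↪ 𝒳) := Function.Embedding.nonempty_of_card_le (by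
    simpa only [Fintype.card_sum, Fintype.card_prod, Fintype.card_coe, Fintype.card_option,
      Fintype.card_fin, mul_comm] using hX)
  refine ⟨slotAggCorr ι hM, fun a ha => card_slotCorr_of_mem ι ha, empirical (sampleRanking ι ω),
    fun B S => if S = composition ι ω B then 1 else 0, isDistr_empirical _,
    fun B _ => ⟨⟨fun S => by positivity, by simp⟩, fun S hS a => ?_⟩, fun B hB a ha => ?_⟩
  · obtain rfl : S = composition ι ω B := by_contra fun h => hS (if_neg h)
    exact ⟨composition_subset_slotCorr ι ω B a, composition_nonempty ι ω B a⟩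
  · simp only [ite_mul, one_mul, zero_mul, Fintype.sum_ite_eq', probOf_empirical, Fintype.card_fin,
      avgSCF, detSCF]
    refine congrArg _ (sum_congr rfl fun k _ => ?_)
    have hiff := exists_forall_pref_iff_wins ι ω (hω k) (mem_fullDomain.1 hB) ha
    by_cases h : Wins (ω k).2 B a
    · rw [if_pos h, if_pos (hiff.2 h)]
    · rw [if_neg h, if_neg (mt hiff.1 h)]

end Realization

theorem exists_menuEffect_samples_distSq_le {A : Type} [Fintype A] [DecidableEq A]
    {AN : Finset A} {ρ : Finset A → A → ℝ} (hρ : IsSCF (fullDomain A) ρ)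
    (hLM : LimitedMonoGen ANᶜ AN (fullDomain A) ρ)
    (hPR : PartialRURational ANᶜ (fullDomain A) ρ) {M : ℕ} (hM : 0 < M) :
    ∃ ω : Fin M → Ranking {c // c ∈ ANᶜ} × (Menu A → A),
      (∀ k, IsMenuEffect AN (ω k).1 (ω k).2) ∧
      distSq (fullDomain A) ρ (avgSCF fun k => (ω k).2) ≤ (fullDomain A).card / M := by
  obtain ⟨w, hw, hadm, hmean⟩ := exists_mixture_detSCF hρ hLM hPR
  obtain ⟨ω, hω, herr⟩ := exists_sample_sum_sq_le hw
    (fun ω (i : (_ : Finset A) × A) => detSCF ω.2 i.1 i.2)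
    (fun ω i => by unfold detSCF; split_ifs <;> norm_num) ((fullDomain A).sigma id) hM
  refine ⟨ω, fun k => hadm _ (hω k), ?_⟩
  have hmean' : ∀ i ∈ (fullDomain A).sigma id, ∑ ω, w ω * detSCF ω.2 i.1 i.2 = ρ i.1 i.2 :=
    fun i hi => hmean _ (mem_sigma.1 hi).1 _
  rw [sum_congr rfl hmean', sum_congr rfl fun i hi => by rw [hmean' i hi], sum_sigma,
    sum_sigma] at herr
  convert herr using 2
  · exact sum_congr rfl fun B hB => by simp [avgSCF]
  · rw [card_eq_sum_ones, Nat.cast_sum, Nat.cast_one]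
    exact (sum_congr rfl fun B hB => (hρ B hB).2.1).symm

theorem stmt18_general {A 𝒳 : Type} [Fintype A] [DecidableEq A] [Fintype 𝒳] [DecidableEq 𝒳]
    (AN : Finset A) (n : ℕ) (h2 : 2 < n)
    (hX : (ANᶜ : Finset A).card + n * AN.card ≤ Fintype.card 𝒳)
    (ρ : Finset A → A → ℝ) (hρ : IsSCF (fullDomain A) ρ)
    (hLM : LimitedMonoGen (ANᶜ : Finset A) AN (fullDomain A) ρ)
    (hPR : PartialRURational (ANᶜ : Finset A) (fullDomain A) ρ) :
    ∃ ρ' : Finset A → A → ℝ, IsSCF (fullDomain A) ρ' ∧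
      RUvec 𝒳 AN (fullDomain A) (fun _ => n) ρ' ∧
      distSq (fullDomain A) ρ ρ' / ((fullDomain A).card : ℝ) ≤ 1 / ((n : ℝ) - 1) := by
  have hM : 0 < n - 1 := by omega
  have hn : n - 1 + 1 = n := by omega
  obtain ⟨ω, hω, hdist⟩ := exists_menuEffect_samples_distSq_le hρ hLM hPR hM
  refine ⟨avgSCF fun k => (ω k).2, isSCF_avgSCF hM fun k B => (hω k B).1,
    by simpa only [hn] using ruvec_avgSCF ω hM (by rwa [hn]) hω, ?_⟩
  rw [Nat.cast_sub (by omega : 1 ≤ n), Nat.cast_one] at hdist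
  have hn1 : (0 : ℝ) < n - 1 := by
    have : (2 : ℝ) < n := by exact_mod_cast h2
    linarith
  refine div_le_of_le_mul₀ (Nat.cast_nonneg _) (by positivity) ?_
  rwa [one_div_mul_eq_div]

/-- **Theorem B.3** (approximation, multiple non-atomic aggregates): for `2 < n < |𝒜_A| + 2`
and any `ρ` satisfying Limited Monotonicity (general form) and partial RU-rationality, there
is `ρ' ∈ RU((n))` with `‖ρ − ρ'‖² / |𝒟| ≤ 1 / (n − 1)`. -/
theorem stmt18 {A 𝒳 : Type} [Fintype A] [DecidableEq A] [Fintype 𝒳] [DecidableEq 𝒳]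
    (AN : Finset A) (n : ℕ) (h2 : 2 < n) (hn : n < (ANᶜ : Finset A).card + 2)
    (hX : (ANᶜ : Finset A).card + n * AN.card ≤ Fintype.card 𝒳)
    (ρ : Finset A → A → ℝ) (hρ : IsSCF (fullDomain A) ρ)
    (hLM : LimitedMonoGen (ANᶜ : Finset A) AN (fullDomain A) ρ)
    (hPR : PartialRURational (ANᶜ : Finset A) (fullDomain A) ρ) :
    ∃ ρ' : Finset A → A → ℝ, IsSCF (fullDomain A) ρ' ∧
      RUvec 𝒳 AN (fullDomain A) (fun _ => n) ρ' ∧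
      distSq (fullDomain A) ρ ρ' / ((fullDomain A).card : ℝ) ≤ 1 / ((n : ℝ) - 1) :=
  stmt18_general AN n h2 hX ρ hρ hLM hPR
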